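/- Stein-type converse (reverse L log L): if f ∈ L^1(K, μ) and M^μ_D f ∈ L^1(K, μ), then |f| log^+|f| ∈ L^1(K, μ) and there is a constant C > 0 with ∫_K |f| log^+|f| dμ ≤ C ∫_K M^μ_D f dμ. -/

import Mathlib

open MeasureTheory Set Filter
open scoped ENNReal NNReal Topology

noncomputable section

abbrev Pt (d : ℕ) := EuclideanSpace ℝ (Fin d)

/-- An iterated function system of contractive similitudes on ℝ^d with attractor `K`
satisfying the strong separation condition. -/
structure IFS (d m : ℕ) where
  S : Fin m → Pt d → Pt d
  r : Fin m → ℝ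
  r_pos : ∀ i, 0 < r i
  r_lt_one : ∀ i, r i < 1
  similitude : ∀ i x y, dist (S i x) (S i y) = r i * dist x y
  K : Set (Pt d)
  K_nonempty : K.Nonempty
  K_compact : IsCompact K
  K_invariant : K = ⋃ i, S i '' K
  ssc : Pairwise fun i j => Disjoint (S i '' K) (S j '' K)

namespace IFS

variable {d m : ℕ}

/-- The composition `S_{i₁} ∘ ⋯ ∘ S_{iₙ}` for the word `w = i₁ ⋯ iₙ`. -/
def cylMap (Φ : IFS d m) (w : List (Fin m)) : Pt d → Pt d :=
  w.foldr (fun i g => Φ.S i ∘ g) id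

/-- The basic cube (cylinder set) `K_w = S_{i₁} ∘ ⋯ ∘ S_{iₙ}(K)`. -/
def cyl (Φ : IFS d m) (w : List (Fin m)) : Set (Pt d) :=
  Φ.cylMap w '' Φ.K

/-- `μ` is the self-similar probability measure associated with the probability
vector `p` (with all `p i > 0`), i.e. `μ = ∑ i, p i • μ ∘ S i ⁻¹`, supported on `K`. -/
def SelfSimilar (Φ : IFS d m) (p : Fin m → ℝ≥0∞) (μ : Measure (Pt d)) : Prop :=
  (∑ i, p i = 1) ∧ (∀ i, 0 < p i) ∧ IsProbabilityMeasure μ ∧ μ Φ.K = 1 ∧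
    μ = ∑ i, p i • μ.map (Φ.S i)

/-- The α-dimensional Hausdorff content on `K` associated with `μ`, defined via
coverings by countable families of basic cubes; `s` is the Hausdorff dimension of `K`. -/
def hContent (Φ : IFS d m) (μ : Measure (Pt d)) (s α : ℝ) (E : Set (Pt d)) : ℝ≥0∞ :=
  ⨅ (C : Set (List (Fin m))) (_ : C.Countable) (_ : E ⊆ ⋃ w ∈ C, Φ.cyl w),
    ∑' w : C, μ (Φ.cyl w.1) ^ (α / s)

/-- The dyadic-type Hardy–Littlewood maximal operator over basic cubes containing `x`. -/
def maxOp (Φ : IFS d m) (μ : Measure (Pt d)) (f : Pt d → ℝ) (x : Pt d) : ℝ≥0∞ :=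
  ⨆ (w : List (Fin m)) (_ : x ∈ Φ.cyl w),
    (μ (Φ.cyl w))⁻¹ * ∫⁻ y in Φ.cyl w, ENNReal.ofReal |f y| ∂μ

end IFS

/-- The Choquet integral of `g` over `E` with respect to the monotone set function `ν`. -/
def choquetInt {X : Type*} (ν : Set X → ℝ≥0∞) (E : Set X) (g : X → ℝ≥0∞) : ℝ≥0∞ :=
  ∫⁻ t in Set.Ioi (0 : ℝ), ν {x ∈ E | ENNReal.ofReal t < g x}

/-- `log⁺ t = max (0, log t)`. -/
def posLog (t : ℝ) : ℝ := max 0 (Real.log t)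

/-!
Write `g = |f|` and `ν = g μ`. By the layer-cake formula,
`∫ g log⁺ g dμ = ∫_{t > 0} ν{g > t} w(t) dt` with `w = 1_{(1,∞)} t⁻¹`.
Fix a level `t ≥ ν(K)` and call a basic cube bad when its `ν`-average exceeds `t`.
The minimal bad cubes are disjoint, and since the parent of each one is not bad (the root `K`
is not), its `ν`-mass is at most `t ∑ p_i⁻¹` times its `μ`-mass. Off the bad cubes `g ≤ t`
a.e.: there every cube has `ν`-average `≤ t`, and a Vitali-type argument with the minimal cubes
inside an open neighbourhood transfers this to every measurable set. Hence
`ν{g > t} ≤ t ∑ p_i⁻¹ μ{Mf > t}`, and integrating against `w` gives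
`∫ g log⁺ g ≤ T ‖f‖₁ + ∑ p_i⁻¹ ∫ Mf` for any `T ≥ ‖f‖₁`, while `‖f‖₁ ≤ ∫ Mf` because `Mf`
dominates the average of `|f|` over `K`.
-/

theorem integral_indicator_inv_eq_posLog {a : ℝ} (ha : 0 ≤ a) :
    ∫ t in (0)..a, (Ioi 1).indicator (fun t => t⁻¹) t = posLog a := by
  have hIoc : Ioi 1 ∩ Ioc 0 a = Ioc 1 (max 1 a) := by
    ext t
    simp only [mem_inter_iff, mem_Ioi, mem_Ioc, le_max_iff]
    constructor
    · rintro ⟨h1, -, h2⟩; exact ⟨h1, .inr h2⟩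
    · rintro ⟨h1, h2 | h2⟩
      · linarith
      · exact ⟨h1, by linarith, h2⟩
  rw [intervalIntegral.integral_of_le ha, integral_indicator measurableSet_Ioi,
    Measure.restrict_restrict measurableSet_Ioi, hIoc,
    ← intervalIntegral.integral_of_le (le_max_left 1 a), integral_inv, div_one]
  · exact (Real.posLog_eq_log_max_one ha).symm
  · rw [uIcc_of_le (le_max_left 1 a)]
    exact fun h => h.1.not_gt one_pos

theorem indicator_Ioi_one_inv_mem_Icc (t : ℝ) :
    (Ioi 1).indicator (fun t : ℝ => t⁻¹) t ∈ Icc 0 1 := by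
  by_cases ht : t ∈ Ioi 1
  · rw [indicator_of_mem ht]
    exact ⟨inv_nonneg.2 (zero_le_one.trans ht.out.le), inv_le_one_of_one_le₀ ht.out.le⟩
  · simp [ht]

theorem lintegral_mul_posLog_eq {α : Type*} [MeasurableSpace α] (μ : Measure α) {f : α → ℝ}
    (hf : AEMeasurable f μ) :
    ∫⁻ x, ENNReal.ofReal (|f x| * posLog |f x|) ∂μ =
      ∫⁻ t in Ioi 0, μ.withDensity (fun x => ENNReal.ofReal |f x|) {x | t < |f x|} *
        ENNReal.ofReal ((Ioi 1).indicator (fun t => t⁻¹) t) := by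
  calc ∫⁻ x, ENNReal.ofReal (|f x| * posLog |f x|) ∂μ
      = ∫⁻ x, ENNReal.ofReal |f x| * ENNReal.ofReal (posLog |f x|) ∂μ :=
        lintegral_congr fun x => ENNReal.ofReal_mul (abs_nonneg _)
    _ = ∫⁻ x, ENNReal.ofReal (posLog |f x|)
          ∂μ.withDensity (fun x => ENNReal.ofReal |f x|) :=
        (lintegral_withDensity_eq_lintegral_mul₀ hf.abs.ennreal_ofReal
          (by unfold posLog; fun_prop)).symm
    _ = ∫⁻ x, ENNReal.ofReal (∫ t in (0)..|f x|, (Ioi 1).indicator (fun t => t⁻¹) t)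
          ∂μ.withDensity (fun x => ENNReal.ofReal |f x|) := by
        simp only [integral_indicator_inv_eq_posLog (abs_nonneg _)]
    _ = _ := lintegral_comp_eq_lintegral_meas_lt_mul _ (ae_of_all _ fun x => abs_nonneg (f x))
        (hf.abs.mono' (withDensity_absolutelyContinuous _ _))
        (fun t _ => (intervalIntegrable_const (c := (1 : ℝ))).mono_fun
          (measurable_inv.indicator measurableSet_Ioi).aestronglyMeasurable
          (ae_of_all _ fun t => by
            dsimp only
            rw [Real.norm_of_nonneg (indicator_Ioi_one_inv_mem_Icc t).1, norm_one]
            exact (indicator_Ioi_one_inv_mem_Icc t).2))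
        (ae_of_all _ fun t => (indicator_Ioi_one_inv_mem_Icc t).1)

theorem lintegral_eq_lintegral_meas_ofReal_lt {α : Type*} [MeasurableSpace α] (μ : Measure α)
    {g : α → ℝ≥0∞} (hg : AEMeasurable g μ) :
    ∫⁻ x, g x ∂μ = ∫⁻ t in Ioi 0, μ {x | ENNReal.ofReal t < g x} := by
  by_cases hfin : ∀ᵐ x ∂μ, g x < ∞
  · calc ∫⁻ x, g x ∂μ = ∫⁻ x, ENNReal.ofReal (g x).toReal ∂μ :=
          lintegral_congr_ae (hfin.mono fun x hx => (ENNReal.ofReal_toReal hx.ne).symm)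
      _ = ∫⁻ t in Ioi 0, μ {x | t < (g x).toReal} :=
          lintegral_eq_lintegral_meas_lt μ (ae_of_all _ fun x => ENNReal.toReal_nonneg)
            hg.ennreal_toReal
      _ = ∫⁻ t in Ioi 0, μ {x | ENNReal.ofReal t < g x} := by
          refine setLIntegral_congr_fun measurableSet_Ioi fun t ht => measure_congr ?_
          filter_upwards [hfin] with x hx
          exact propext (ENNReal.ofReal_lt_iff_lt_toReal (le_of_lt ht) hx.ne).symm
  · have htop : μ {x | g x = ∞} ≠ 0 := by simpa [ae_iff] using hfin
    refine (lintegral_eq_top_of_measure_eq_top_ne_zero hg htop).trans (top_le_iff.1 ?_).symm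
    calc ∞ = ∫⁻ _ in Ioi (0 : ℝ), μ {x | g x = ∞} := by simp [htop]
      _ ≤ ∫⁻ t in Ioi 0, μ {x | ENNReal.ofReal t < g x} :=
          lintegral_mono fun t => measure_mono fun x hx => by simp [hx.out]

namespace IFS

variable {d m : ℕ}

section Geometry

variable (Φ : IFS d m)

theorem continuous_S (i : Fin m) : Continuous (Φ.S i) :=
  (LipschitzWith.of_dist_le_mul (K := ⟨Φ.r i, (Φ.r_pos i).le⟩)
    fun x y => (Φ.similitude i x y).le).continuous

theorem injective_S (i : Fin m) : Function.Injective (Φ.S i) := fun x y h => by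
  have : Φ.r i * dist x y = 0 := by rw [← Φ.similitude, h, dist_self]
  simpa [(Φ.r_pos i).ne'] using this

theorem image_S_subset_K (i : Fin m) : Φ.S i '' Φ.K ⊆ Φ.K := by
  conv_rhs => rw [Φ.K_invariant]
  exact subset_iUnion (fun j => Φ.S j '' Φ.K) i

@[simp] theorem cyl_nil : Φ.cyl [] = Φ.K := image_id _

theorem cyl_cons (i : Fin m) (w : List (Fin m)) : Φ.cyl (i :: w) = Φ.S i '' Φ.cyl w :=
  image_comp (Φ.S i) (Φ.cylMap w) Φ.K

theorem cylMap_append (u v : List (Fin m)) : Φ.cylMap (u ++ v) = Φ.cylMap u ∘ Φ.cylMap v := by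
  induction u with
  | nil => rfl
  | cons i u ih => exact congrArg (Φ.S i ∘ ·) ih

theorem cyl_append (u v : List (Fin m)) : Φ.cyl (u ++ v) = Φ.cylMap u '' Φ.cyl v := by
  rw [cyl, cylMap_append, image_comp, cyl]

theorem continuous_cylMap (w : List (Fin m)) : Continuous (Φ.cylMap w) := by
  induction w with
  | nil => exact continuous_id
  | cons i w ih => exact (Φ.continuous_S i).comp ih

theorem isCompact_cyl (w : List (Fin m)) : IsCompact (Φ.cyl w) :=
  Φ.K_compact.image (Φ.continuous_cylMap w)

theorem measurableSet_cyl (w : List (Fin m)) : MeasurableSet (Φ.cyl w) :=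
  (Φ.isCompact_cyl w).measurableSet

theorem cyl_subset_K (w : List (Fin m)) : Φ.cyl w ⊆ Φ.K := by
  induction w with
  | nil => rw [cyl_nil]
  | cons i w ih => rw [cyl_cons]; exact (image_mono ih).trans (Φ.image_S_subset_K i)

theorem cyl_subset_cyl_of_prefix {u w : List (Fin m)} (h : u <+: w) : Φ.cyl w ⊆ Φ.cyl u := by
  obtain ⟨v, rfl⟩ := h
  rw [cyl_append]
  exact image_mono (Φ.cyl_subset_K v)

theorem disjoint_cyl {u w : List (Fin m)} (huw : ¬u <+: w) (hwu : ¬w <+: u) :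
    Disjoint (Φ.cyl u) (Φ.cyl w) := by
  induction u generalizing w with
  | nil => exact absurd List.nil_prefix huw
  | cons i u ih =>
    cases w with
    | nil => exact absurd List.nil_prefix hwu
    | cons j w =>
      rw [cyl_cons, cyl_cons]
      by_cases hij : i = j
      · subst hij
        simp only [List.cons_prefix_cons, true_and] at huw hwu
        exact (disjoint_image_iff (Φ.injective_S i)).2 (ih huw hwu)
      · exact (Φ.ssc hij).mono (image_mono (Φ.cyl_subset_K u)) (image_mono (Φ.cyl_subset_K w))

def minimalWords (𝒞 : Set (List (Fin m))) : Set (List (Fin m)) :=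
  {w | w ∈ 𝒞 ∧ ∀ v ∈ 𝒞, v <+: w → v = w}

theorem exists_mem_minimalWords_prefix {𝒞 : Set (List (Fin m))} {w : List (Fin m)}
    (hw : w ∈ 𝒞) : ∃ u ∈ minimalWords 𝒞, u <+: w := by
  obtain ⟨u, ⟨hu, huw⟩, hmin⟩ :=
    (measure List.length).wf.has_min {u | u ∈ 𝒞 ∧ u <+: w} ⟨w, hw, List.prefix_refl w⟩
  refine ⟨u, ⟨hu, fun v hv hvu => ?_⟩, huw⟩
  by_contra hne
  exact hmin v ⟨hv, hvu.trans huw⟩ (lt_of_le_of_ne hvu.length_le fun h => hne (hvu.eq_of_length h))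

theorem biUnion_minimalWords_cyl (𝒞 : Set (List (Fin m))) :
    ⋃ w ∈ minimalWords 𝒞, Φ.cyl w = ⋃ w ∈ 𝒞, Φ.cyl w := by
  refine (biUnion_mono (fun w hw => hw.1) fun _ _ => subset_rfl).antisymm
    (iUnion₂_subset fun w hw => ?_)
  obtain ⟨u, hu, huw⟩ := exists_mem_minimalWords_prefix hw
  exact (Φ.cyl_subset_cyl_of_prefix huw).trans (subset_biUnion_of_mem hu)

theorem pairwiseDisjoint_minimalWords_cyl (𝒞 : Set (List (Fin m))) :
    (minimalWords 𝒞).PairwiseDisjoint Φ.cyl := fun u hu w hw hne =>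
  Φ.disjoint_cyl (fun h => hne (hw.2 u hu.1 h)) fun h => hne (hu.2 w hw.1 h).symm

theorem exists_cyl_length_eq (n : ℕ) {x : Pt d} (hx : x ∈ Φ.K) :
    ∃ w : List (Fin m), w.length = n ∧ x ∈ Φ.cyl w := by
  induction n generalizing x with
  | zero => exact ⟨[], rfl, by rwa [cyl_nil]⟩
  | succ n ih =>
    rw [Φ.K_invariant] at hx
    obtain ⟨i, y, hy, rfl⟩ := mem_iUnion.1 hx
    obtain ⟨w, hlen, hyw⟩ := ih hy
    exact ⟨i :: w, by simp [hlen], by rw [cyl_cons]; exact mem_image_of_mem _ hyw⟩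

theorem diam_cyl_le {ρ : ℝ} (hρ : ∀ i, Φ.r i ≤ ρ) (w : List (Fin m)) :
    Metric.diam (Φ.cyl w) ≤ ρ ^ w.length * Metric.diam Φ.K := by
  induction w with
  | nil => simp
  | cons i w ih =>
    have hr := (Φ.r_pos i).le
    have hρ0 := hr.trans (hρ i)
    rw [cyl_cons, List.length_cons, pow_succ', mul_assoc]
    refine Metric.diam_le_of_forall_dist_le (by positivity) ?_
    rintro _ ⟨a, ha, rfl⟩ _ ⟨b, hb, rfl⟩
    rw [Φ.similitude]
    calc Φ.r i * dist a b ≤ Φ.r i * (ρ ^ w.length * Metric.diam Φ.K) :=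
          mul_le_mul_of_nonneg_left
            ((Metric.dist_le_diam_of_mem (Φ.isCompact_cyl w).isBounded ha hb).trans ih) hr
      _ ≤ ρ * (ρ ^ w.length * Metric.diam Φ.K) :=
          mul_le_mul_of_nonneg_right (hρ i) (by positivity)

theorem exists_mem_cyl_subset {x : Pt d} (hx : x ∈ Φ.K) {W : Set (Pt d)} (hW : W ∈ 𝓝 x) :
    ∃ w, x ∈ Φ.cyl w ∧ Φ.cyl w ⊆ W := by
  have : Nonempty (Fin m) := by
    rw [Φ.K_invariant] at hx
    exact ⟨(mem_iUnion.1 hx).choose⟩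
  obtain ⟨i₀, hi₀⟩ := Finite.exists_max Φ.r
  obtain ⟨ε, hε, hball⟩ := Metric.mem_nhds_iff.1 hW
  have hsmall : Tendsto (fun n : ℕ => Φ.r i₀ ^ n * Metric.diam Φ.K) atTop (𝓝 0) := by
    simpa using (tendsto_pow_atTop_nhds_zero_of_lt_one (Φ.r_pos i₀).le
      (Φ.r_lt_one i₀)).mul_const (Metric.diam Φ.K)
  obtain ⟨n, hn⟩ := (hsmall.eventually (gt_mem_nhds hε)).exists
  obtain ⟨w, rfl, hxw⟩ := Φ.exists_cyl_length_eq n hx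
  refine ⟨w, hxw, fun y hy => hball (Metric.mem_ball.2 ?_)⟩
  calc dist y x ≤ Metric.diam (Φ.cyl w) :=
        Metric.dist_le_diam_of_mem (Φ.isCompact_cyl w).isBounded hy hxw
    _ ≤ Φ.r i₀ ^ w.length * Metric.diam Φ.K := Φ.diam_cyl_le hi₀ w
    _ < ε := hn

end Geometry

section Measure

variable {Φ : IFS d m} {p : Fin m → ℝ≥0∞} {μ : Measure (Pt d)}

namespace SelfSimilar

theorem isProbabilityMeasure (hμ : Φ.SelfSimilar p μ) : IsProbabilityMeasure μ := hμ.2.2.1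

theorem weight_ne_zero (hμ : Φ.SelfSimilar p μ) (i : Fin m) : p i ≠ 0 := (hμ.2.1 i).ne'

theorem weight_ne_top (hμ : Φ.SelfSimilar p μ) (i : Fin m) : p i ≠ ∞ :=
  ((Finset.single_le_sum (fun _ _ => zero_le) (Finset.mem_univ i)).trans_eq hμ.1).trans_lt
    ENNReal.one_lt_top |>.ne

theorem measure_K (hμ : Φ.SelfSimilar p μ) : μ Φ.K = 1 := hμ.2.2.2.1

theorem measure_compl_K (hμ : Φ.SelfSimilar p μ) : μ Φ.Kᶜ = 0 := by
  have := hμ.isProbabilityMeasure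
  rw [prob_compl_eq_zero_iff Φ.K_compact.measurableSet, hμ.measure_K]

theorem ae_mem_K (hμ : Φ.SelfSimilar p μ) : ∀ᵐ x ∂μ, x ∈ Φ.K :=
  measure_compl_K hμ

theorem restrict_K (hμ : Φ.SelfSimilar p μ) : μ.restrict Φ.K = μ :=
  Measure.restrict_eq_self_of_ae_mem hμ.ae_mem_K

theorem measure_image_S (hμ : Φ.SelfSimilar p μ) (i : Fin m) {B : Set (Pt d)}
    (hB : IsCompact B) (hBK : B ⊆ Φ.K) : μ (Φ.S i '' B) = p i * μ B := by
  have hSB : MeasurableSet (Φ.S i '' B) := (hB.image (Φ.continuous_S i)).measurableSet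
  conv_lhs => rw [hμ.2.2.2.2]
  rw [Measure.finsetSum_apply, Finset.sum_eq_single i]
  · rw [Measure.smul_apply, Measure.map_apply (Φ.continuous_S i).measurable hSB,
      preimage_image_eq B (Φ.injective_S i), smul_eq_mul]
  · intro j _ hji
    have hKc : Φ.S j ⁻¹' (Φ.S i '' B) ⊆ Φ.Kᶜ := fun x hx hxK =>
      disjoint_left.1 (Φ.ssc hji) (mem_image_of_mem _ hxK) (image_mono hBK hx)
    rw [Measure.smul_apply, Measure.map_apply (Φ.continuous_S j).measurable hSB,
      measure_mono_null hKc hμ.measure_compl_K, smul_zero]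
  · simp

theorem measure_cyl (hμ : Φ.SelfSimilar p μ) (w : List (Fin m)) :
    μ (Φ.cyl w) = (w.map p).prod := by
  induction w with
  | nil => simp [hμ.measure_K]
  | cons i w ih =>
    rw [cyl_cons, hμ.measure_image_S i (Φ.isCompact_cyl w) (Φ.cyl_subset_K w), ih,
      List.map_cons, List.prod_cons]

theorem measure_cyl_ne_zero (hμ : Φ.SelfSimilar p μ) (w : List (Fin m)) : μ (Φ.cyl w) ≠ 0 := by
  rw [hμ.measure_cyl]
  exact List.prod_ne_zero (by simpa using fun i _ => hμ.weight_ne_zero i)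

theorem measure_cyl_le_mul_measure_cyl_append (hμ : Φ.SelfSimilar p μ) (u : List (Fin m))
    (j : Fin m) : μ (Φ.cyl u) ≤ (∑ i, (p i)⁻¹) * μ (Φ.cyl (u ++ [j])) := by
  rw [hμ.measure_cyl (u ++ [j]), List.map_append, List.prod_append, ← hμ.measure_cyl]
  calc μ (Φ.cyl u) = (p j)⁻¹ * (μ (Φ.cyl u) * p j) := by
        rw [mul_comm, mul_assoc, ENNReal.mul_inv_cancel (hμ.weight_ne_zero j) (hμ.weight_ne_top j), mul_one]
    _ ≤ (∑ i, (p i)⁻¹) * (μ (Φ.cyl u) * ([j].map p).prod) := by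
        simpa using mul_le_mul_left (Finset.single_le_sum (f := fun i => (p i)⁻¹)
          (fun i _ => zero_le) (Finset.mem_univ j)) _

theorem sum_inv_ne_top (hμ : Φ.SelfSimilar p μ) : ∑ i, (p i)⁻¹ ≠ ∞ :=
  ENNReal.sum_ne_top.2 fun i _ => ENNReal.inv_ne_top.2 (hμ.weight_ne_zero i)

end SelfSimilar

end Measure

section MaximalOperator

variable (Φ : IFS d m) (μ : Measure (Pt d))

theorem measurable_maxOp (f : Pt d → ℝ) : Measurable (Φ.maxOp μ f) := by
  have : Φ.maxOp μ f = fun x => ⨆ w, (Φ.cyl w).indicator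
      (fun _ => (μ (Φ.cyl w))⁻¹ * ∫⁻ y in Φ.cyl w, ENNReal.ofReal |f y| ∂μ) x := by
    ext x
    refine iSup_congr fun w => ?_
    by_cases h : x ∈ Φ.cyl w <;> simp [h]
  rw [this]
  exact .iSup fun w => measurable_const.indicator (Φ.measurableSet_cyl w)

theorem le_maxOp (f : Pt d → ℝ) {x : Pt d} {w : List (Fin m)} (hx : x ∈ Φ.cyl w) :
    (μ (Φ.cyl w))⁻¹ * ∫⁻ y in Φ.cyl w, ENNReal.ofReal |f y| ∂μ ≤ Φ.maxOp μ f x :=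
  le_iSup₂ (f := fun w (_ : x ∈ Φ.cyl w) =>
    (μ (Φ.cyl w))⁻¹ * ∫⁻ y in Φ.cyl w, ENNReal.ofReal |f y| ∂μ) w hx

variable {Φ μ}

theorem SelfSimilar.lintegral_le_lintegral_maxOp {p : Fin m → ℝ≥0∞} (hμ : Φ.SelfSimilar p μ)
    (f : Pt d → ℝ) : ∫⁻ x, ENNReal.ofReal |f x| ∂μ ≤ ∫⁻ x, Φ.maxOp μ f x ∂μ := by
  have := hμ.isProbabilityMeasure
  calc ∫⁻ x, ENNReal.ofReal |f x| ∂μ = ∫⁻ _, ∫⁻ y, ENNReal.ofReal |f y| ∂μ ∂μ := by simp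
    _ ≤ ∫⁻ x, Φ.maxOp μ f x ∂μ := lintegral_mono_ae <| hμ.ae_mem_K.mono fun x hx => by
        simpa [hμ.measure_K, hμ.restrict_K] using Φ.le_maxOp μ f (w := []) (by simpa using hx)

end MaximalOperator

section Covering

variable (Φ : IFS d m) {ν μ : Measure (Pt d)} {c : ℝ≥0∞}

theorem measure_biUnion_cyl_le {𝒞 : Set (List (Fin m))}
    (h : ∀ w ∈ minimalWords 𝒞, ν (Φ.cyl w) ≤ c * μ (Φ.cyl w)) :
    ν (⋃ w ∈ 𝒞, Φ.cyl w) ≤ c * μ (⋃ w ∈ 𝒞, Φ.cyl w) := by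
  rw [← Φ.biUnion_minimalWords_cyl]
  calc ν (⋃ w ∈ minimalWords 𝒞, Φ.cyl w) ≤ ∑' w : minimalWords 𝒞, ν (Φ.cyl w) :=
        measure_biUnion_le _ (to_countable _) _
    _ ≤ ∑' w : minimalWords 𝒞, c * μ (Φ.cyl w) := ENNReal.tsum_le_tsum fun w => h w w.2
    _ = c * μ (⋃ w ∈ minimalWords 𝒞, Φ.cyl w) := by
        rw [ENNReal.tsum_mul_left, measure_biUnion (to_countable _)
          (Φ.pairwiseDisjoint_minimalWords_cyl 𝒞) fun w _ => Φ.measurableSet_cyl w]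

theorem measure_le_of_forall_cyl_le [IsFiniteMeasure μ] (hc : c ≠ ∞) {B : Set (Pt d)}
    (hB : B ⊆ Φ.K) (h : ∀ w, (Φ.cyl w ∩ B).Nonempty → ν (Φ.cyl w) ≤ c * μ (Φ.cyl w)) :
    ν B ≤ c * μ B := by
  have := Measure.OuterRegular.smul μ hc
  change ν B ≤ (c • μ) B
  rw [B.measure_eq_iInf_isOpen (c • μ)]
  refine le_iInf₂ fun W hBW => le_iInf fun hW => ?_
  let 𝒞 := {w | Φ.cyl w ⊆ W ∧ (Φ.cyl w ∩ B).Nonempty}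
  calc ν B ≤ ν (⋃ w ∈ 𝒞, Φ.cyl w) := measure_mono fun x hx => by
        obtain ⟨w, hxw, hwW⟩ := Φ.exists_mem_cyl_subset (hB hx) (hW.mem_nhds (hBW hx))
        exact mem_biUnion ⟨hwW, x, hxw, hx⟩ hxw
    _ ≤ c * μ (⋃ w ∈ 𝒞, Φ.cyl w) := Φ.measure_biUnion_cyl_le fun w hw => h w hw.1.2
    _ ≤ c * μ W := mul_le_mul_right (measure_mono (iUnion₂_subset fun w hw => hw.1)) c

theorem ae_le_of_forall_setLIntegral_cyl_le [IsFiniteMeasure μ] {g : Pt d → ℝ≥0∞}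
    (hg : AEMeasurable g μ) (hc : c ≠ ∞) {B : Set (Pt d)} (hBm : MeasurableSet B)
    (hB : B ⊆ Φ.K)
    (h : ∀ w, (Φ.cyl w ∩ B).Nonempty → ∫⁻ x in Φ.cyl w, g x ∂μ ≤ c * μ (Φ.cyl w)) :
    ∀ᵐ x ∂μ.restrict B, g x ≤ c := by
  refine ae_le_of_forall_setLIntegral_le_of_sigmaFinite₀ hg.restrict fun s hs _ => ?_
  rw [Measure.restrict_restrict hs, setLIntegral_const, ← withDensity_apply _ (hs.inter hBm)]
  refine Φ.measure_le_of_forall_cyl_le (μ := μ) hc (inter_subset_right.trans hB) fun w hw => ?_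
  rw [withDensity_apply _ (Φ.measurableSet_cyl w)]
  exact h w (hw.mono (inter_subset_inter_right _ inter_subset_right))

end Covering

section StoppingTime

variable {Φ : IFS d m} {p : Fin m → ℝ≥0∞} {ν μ : Measure (Pt d)} {c : ℝ≥0∞}

variable (Φ) in
def badWords (ν μ : Measure (Pt d)) (c : ℝ≥0∞) : Set (List (Fin m)) :=
  {w | c * μ (Φ.cyl w) < ν (Φ.cyl w)}

theorem SelfSimilar.measure_biUnion_badWords_le (hμ : Φ.SelfSimilar p μ) (hνK : ν Φ.K ≤ c) :
    ν (⋃ w ∈ Φ.badWords ν μ c, Φ.cyl w) ≤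
      c * (∑ i, (p i)⁻¹) * μ (⋃ w ∈ Φ.badWords ν μ c, Φ.cyl w) := by
  refine Φ.measure_biUnion_cyl_le fun w ⟨hw, hmin⟩ => ?_
  -- a minimal bad word is not the root `[]`, and its parent is not bad
  rcases List.eq_nil_or_concat' w with rfl | ⟨u, j, rfl⟩
  · simp only [badWords, mem_ofPred_eq, cyl_nil, hμ.measure_K, mul_one] at hw
    exact absurd hνK hw.not_ge
  · have hu : u ∉ Φ.badWords ν μ c := fun hu => by
      simpa using hmin u hu (List.prefix_append u [j])
    calc ν (Φ.cyl (u ++ [j])) ≤ ν (Φ.cyl u) :=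
          measure_mono (Φ.cyl_subset_cyl_of_prefix (List.prefix_append u [j]))
      _ ≤ c * μ (Φ.cyl u) := not_lt.1 hu
      _ ≤ c * ((∑ i, (p i)⁻¹) * μ (Φ.cyl (u ++ [j]))) :=
          mul_le_mul_right (hμ.measure_cyl_le_mul_measure_cyl_append u j) c
      _ = c * (∑ i, (p i)⁻¹) * μ (Φ.cyl (u ++ [j])) := (mul_assoc _ _ _).symm

theorem SelfSimilar.biUnion_badWords_subset (hμ : Φ.SelfSimilar p μ) (f : Pt d → ℝ) :
    ⋃ w ∈ Φ.badWords (μ.withDensity fun x => ENNReal.ofReal |f x|) μ c, Φ.cyl w ⊆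
      {x | c < Φ.maxOp μ f x} := by
  have := hμ.isProbabilityMeasure
  simp only [subset_def, mem_iUnion₂, mem_ofPred_eq]
  rintro x ⟨w, hw, hxw⟩
  refine lt_of_lt_of_le ?_ (Φ.le_maxOp μ f hxw)
  rw [badWords, mem_ofPred_eq, withDensity_apply _ (Φ.measurableSet_cyl w)] at hw
  rwa [mul_comm, ← div_eq_mul_inv, ENNReal.lt_div_iff_mul_lt (.inl (hμ.measure_cyl_ne_zero w))
    (.inl (measure_ne_top μ _))]

theorem SelfSimilar.ae_le_of_notMem_biUnion_badWords (hμ : Φ.SelfSimilar p μ)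
    {g : Pt d → ℝ≥0∞} (hg : AEMeasurable g μ) (hc : c ≠ ∞) :
    ∀ᵐ x ∂μ, x ∉ ⋃ w ∈ Φ.badWords (μ.withDensity g) μ c, Φ.cyl w → g x ≤ c := by
  have := hμ.isProbabilityMeasure
  set U := ⋃ w ∈ Φ.badWords (μ.withDensity g) μ c, Φ.cyl w
  have hUm : MeasurableSet U := .biUnion (to_countable _) fun w _ => Φ.measurableSet_cyl w
  have hgood := Φ.ae_le_of_forall_setLIntegral_cyl_le hg hc
    (Φ.K_compact.measurableSet.diff hUm) sdiff_subset fun w ⟨x, hxw, _, hxU⟩ => by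
      rw [← withDensity_apply _ (Φ.measurableSet_cyl w)]
      exact not_lt.1 fun hw => hxU (mem_biUnion hw hxw)
  filter_upwards [(ae_restrict_iff' (Φ.K_compact.measurableSet.diff hUm)).1 hgood,
    hμ.ae_mem_K] with x hx hxK hxU using hx ⟨hxK, hxU⟩

theorem SelfSimilar.withDensity_le_measure_lt_maxOp (hμ : Φ.SelfSimilar p μ) {f : Pt d → ℝ}
    (hf : AEMeasurable f μ) {t : ℝ} (ht : 0 < t)
    (hfK : ∫⁻ x, ENNReal.ofReal |f x| ∂μ ≤ ENNReal.ofReal t) :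
    μ.withDensity (fun x => ENNReal.ofReal |f x|) {x | t < |f x|} ≤
      ENNReal.ofReal t * (∑ i, (p i)⁻¹) * μ {x | ENNReal.ofReal t < Φ.maxOp μ f x} := by
  set ν := μ.withDensity fun x => ENNReal.ofReal |f x|
  set U := ⋃ w ∈ Φ.badWords ν μ (ENNReal.ofReal t), Φ.cyl w
  have hsub : {x | t < |f x|} ≤ᵐ[ν] U := by
    refine (withDensity_absolutelyContinuous _ _).ae_le ?_
    filter_upwards [hμ.ae_le_of_notMem_biUnion_badWords hf.abs.ennreal_ofReal
      ENNReal.ofReal_ne_top] with x hx hlt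
    by_contra hxU
    exact (ENNReal.ofReal_le_ofReal_iff ht.le).1 (hx hxU) |>.not_gt hlt
  have hνK : ν Φ.K ≤ ENNReal.ofReal t := by
    rw [withDensity_apply _ Φ.K_compact.measurableSet, hμ.restrict_K]
    exact hfK
  calc ν {x | t < |f x|} ≤ ν U := measure_mono_ae hsub
    _ ≤ ENNReal.ofReal t * (∑ i, (p i)⁻¹) * μ U := hμ.measure_biUnion_badWords_le hνK
    _ ≤ _ := mul_le_mul_right (measure_mono (hμ.biUnion_badWords_subset f)) _

end StoppingTime

section Estimate

variable {Φ : IFS d m} {p : Fin m → ℝ≥0∞} {μ : Measure (Pt d)}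

theorem SelfSimilar.withDensity_mul_indicator_inv_le (hμ : Φ.SelfSimilar p μ) {f : Pt d → ℝ}
    (hf : AEMeasurable f μ) {t : ℝ} (ht : 0 < t)
    (hfK : ∫⁻ x, ENNReal.ofReal |f x| ∂μ ≤ ENNReal.ofReal t) :
    μ.withDensity (fun x => ENNReal.ofReal |f x|) {x | t < |f x|} *
        ENNReal.ofReal ((Ioi 1).indicator (·⁻¹) t) ≤
      (∑ i, (p i)⁻¹) * μ {x | ENNReal.ofReal t < Φ.maxOp μ f x} :=
  calc _ ≤ ENNReal.ofReal t * (∑ i, (p i)⁻¹) * μ {x | ENNReal.ofReal t < Φ.maxOp μ f x} *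
          (ENNReal.ofReal t)⁻¹ := by
        gcongr
        · exact hμ.withDensity_le_measure_lt_maxOp hf ht hfK
        · rw [← ENNReal.ofReal_inv_of_pos ht]
          exact ENNReal.ofReal_le_ofReal (indicator_le_self' (fun _ _ => inv_nonneg.2 ht.le) t)
    _ = (∑ i, (p i)⁻¹) * μ {x | ENNReal.ofReal t < Φ.maxOp μ f x} := by
        rw [mul_comm, ← mul_assoc, ← mul_assoc,
          ENNReal.inv_mul_cancel (ENNReal.ofReal_pos.2 ht).ne' ENNReal.ofReal_ne_top, one_mul]

theorem SelfSimilar.lintegral_mul_posLog_le (hμ : Φ.SelfSimilar p μ) {f : Pt d → ℝ}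
    (hf : AEMeasurable f μ) {T : ℝ} (hT : 0 < T)
    (hfT : ∫⁻ x, ENNReal.ofReal |f x| ∂μ ≤ ENNReal.ofReal T) :
    ∫⁻ x, ENNReal.ofReal (|f x| * posLog |f x|) ∂μ ≤
      ENNReal.ofReal T * ∫⁻ x, ENNReal.ofReal |f x| ∂μ +
        (∑ i, (p i)⁻¹) * ∫⁻ x, Φ.maxOp μ f x ∂μ := by
  set ν := μ.withDensity fun x => ENNReal.ofReal |f x|
  have hν : ν univ = ∫⁻ x, ENNReal.ofReal |f x| ∂μ := by
    rw [withDensity_apply _ MeasurableSet.univ, Measure.restrict_univ]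
  rw [lintegral_mul_posLog_eq μ hf, ← Ioc_union_Ioi_eq_Ioi hT.le,
    lintegral_union measurableSet_Ioi (Ioc_disjoint_Ioi le_rfl)]
  gcongr ?_ + ?_
  · calc ∫⁻ t in Ioc 0 T, ν {x | t < |f x|} * ENNReal.ofReal ((Ioi 1).indicator (·⁻¹) t)
        ≤ ∫⁻ _ in Ioc 0 T, ν univ * 1 := lintegral_mono fun t =>
          mul_le_mul' (measure_mono (subset_univ _))
            (ENNReal.ofReal_le_one.2 (indicator_Ioi_one_inv_mem_Icc t).2)
      _ = ENNReal.ofReal T * ∫⁻ x, ENNReal.ofReal |f x| ∂μ := by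
          rw [mul_one, setLIntegral_const, Real.volume_Ioc, sub_zero, hν, mul_comm]
  · calc ∫⁻ t in Ioi T, ν {x | t < |f x|} * ENNReal.ofReal ((Ioi 1).indicator (·⁻¹) t)
        ≤ ∫⁻ t in Ioi T, (∑ i, (p i)⁻¹) * μ {x | ENNReal.ofReal t < Φ.maxOp μ f x} :=
          setLIntegral_mono' measurableSet_Ioi fun t ht =>
            hμ.withDensity_mul_indicator_inv_le hf (hT.trans ht)
              (hfT.trans (ENNReal.ofReal_le_ofReal ht.out.le))
      _ ≤ (∑ i, (p i)⁻¹) * ∫⁻ t in Ioi 0, μ {x | ENNReal.ofReal t < Φ.maxOp μ f x} := by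
          rw [lintegral_const_mul' _ _ hμ.sum_inv_ne_top]
          exact mul_le_mul_right (lintegral_mono_set (Ioi_subset_Ioi hT.le)) _
      _ = (∑ i, (p i)⁻¹) * ∫⁻ x, Φ.maxOp μ f x ∂μ := by
          rw [← lintegral_eq_lintegral_meas_ofReal_lt μ (Φ.measurable_maxOp μ f).aemeasurable]

end Estimate

end IFS

/-- Stein-type converse of the `L log L` inequality: if `f ∈ L¹(K,μ)` and
`M f ∈ L¹(K,μ)`, then `|f| log⁺ |f| ∈ L¹(K,μ)` with a quantitative bound. -/
theorem stein_converse (d m : ℕ) (Φ : IFS d m) (p : Fin m → ℝ≥0∞)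
    (μ : Measure (Pt d)) (hμ : Φ.SelfSimilar p μ)
    (f : Pt d → ℝ) (hf : IntegrableOn f Φ.K μ)
    (hM : ∫⁻ x in Φ.K, Φ.maxOp μ f x ∂μ < ∞) :
    (∫⁻ x in Φ.K, ENNReal.ofReal (|f x| * posLog |f x|) ∂μ < ∞) ∧
    ∃ C : ℝ, 0 < C ∧
      ∫⁻ x in Φ.K, ENNReal.ofReal (|f x| * posLog |f x|) ∂μ ≤
        ENNReal.ofReal C * ∫⁻ x in Φ.K, Φ.maxOp μ f x ∂μ := by
  -- `C` has to depend on `f`: for `f ≡ λ > 1` the left side is `λ log λ` and `∫ Mf = λ`.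
  rw [IntegrableOn, hμ.restrict_K] at hf
  rw [hμ.restrict_K] at hM ⊢
  set R := ∫⁻ x, Φ.maxOp μ f x ∂μ
  set C := R.toReal + 1 + (∑ i, (p i)⁻¹).toReal
  have hR : R ≤ ENNReal.ofReal (R.toReal + 1) := by
    rw [ENNReal.le_ofReal_iff_toReal_le hM.ne (by positivity)]
    exact le_add_of_nonneg_right zero_le_one
  have hbound : ∫⁻ x, ENNReal.ofReal (|f x| * posLog |f x|) ∂μ ≤ ENNReal.ofReal C * R :=
    calc ∫⁻ x, ENNReal.ofReal (|f x| * posLog |f x|) ∂μ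
        ≤ ENNReal.ofReal (R.toReal + 1) * ∫⁻ x, ENNReal.ofReal |f x| ∂μ + (∑ i, (p i)⁻¹) * R :=
          hμ.lintegral_mul_posLog_le hf.aemeasurable (by positivity)
            ((hμ.lintegral_le_lintegral_maxOp f).trans hR)
      _ ≤ ENNReal.ofReal (R.toReal + 1) * R + (∑ i, (p i)⁻¹) * R := by
          gcongr
          exact hμ.lintegral_le_lintegral_maxOp f
      _ = ENNReal.ofReal C * R := by
          rw [← add_mul, ENNReal.ofReal_add (by positivity) ENNReal.toReal_nonneg,
            ENNReal.ofReal_toReal hμ.sum_inv_ne_top]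
  exact ⟨hbound.trans_lt (ENNReal.mul_lt_top ENNReal.ofReal_lt_top hM), C, by positivity, hbound⟩
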